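/- arXiv:1304.2297 — 3 statements merged into one kernel-verified Lean document; each statement's English description precedes it below -/
import Mathlib

section
/- Let D ⊂ ℝ² be a bounded domain and let k > 0. If ∫_D e^{ik α·x} dx = 0 for every α ∈ S¹ (the unit circle in ℝ²), then ∫_D e^{ik (z₁ x₁ + z₂ x₂)} dx = 0 for every z = (z₁, z₂) ∈ ℂ² satisfying z₁² + z₂² = 1. -/
open MeasureTheory Metric Filter Function Complex Topology

/-!
Every point of the complexified circle is `(cos w, sin w)` for some `w ∈ ℂ`. Since `D` is bounded,
`w ↦ ∫_D exp(ik (cos w · x₁ + sin w · x₂)) dx` is entire (differentiate under the integral sign),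
and for real `w` it is the hypothesis at `α = (cos w, sin w) ∈ S¹`. An entire function vanishing
on `ℝ` vanishes identically.
-/

theorem hasDerivAt_setIntegral_of_continuous {𝕜 X E : Type*} [RCLike 𝕜] [TopologicalSpace X]
    [MeasurableSpace X] [OpensMeasurableSpace X] [NormedAddCommGroup E] [NormedSpace ℝ E]
    [NormedSpace 𝕜 E] [SecondCountableTopologyEither X E] {μ : Measure X}
    [IsFiniteMeasureOnCompacts μ] {s : Set X} (hs : IsCompact (closure s)) {F F' : 𝕜 → X → E}
    (hF : ∀ w, Continuous (F w)) (hF' : Continuous (uncurry F')) (hFF' : ∀ w x, HasDerivAt (F · x) (F' w x) w) (w₀ : 𝕜) :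
    HasDerivAt (fun w ↦ ∫ x in s, F w x ∂μ) (∫ x in s, F' w₀ x ∂μ) w₀ := by
  obtain ⟨C, hC⟩ := ((isCompact_closedBall w₀ 1).prod hs).exists_bound_of_continuousOn
    hF'.continuousOn
  have hμs : μ s < ⊤ := (measure_mono subset_closure).trans_lt hs.measure_lt_top
  have hs_closure : ∀ᵐ x ∂μ.restrict s, x ∈ closure s :=
    ae_restrict_of_ae_restrict_of_subset subset_closure
      (ae_restrict_mem isClosed_closure.measurableSet)
  refine (hasDerivAt_integral_of_dominated_loc_of_deriv_le (bound := fun _ ↦ C)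
    (ball_mem_nhds w₀ one_pos) (.of_forall fun w ↦ (hF w).aestronglyMeasurable)
    (((hF w₀).continuousOn.integrableOn_compact' hs isClosed_closure.measurableSet).mono_set
      subset_closure)
    (hF'.comp (Continuous.prodMk_right w₀)).aestronglyMeasurable ?_
    (integrableOn_const hμs.ne) (.of_forall fun x w _ ↦ hFF' w x)).2
  filter_upwards [hs_closure] with x hx w hw
  exact hC (w, x) ⟨ball_subset_closedBall hw, hx⟩

theorem Differentiable.eq_zero_of_forall_ofReal {E : Type*} [NormedAddCommGroup E]
    [NormedSpace ℂ E] [CompleteSpace E] {g : ℂ → E} (hg : Differentiable ℂ g)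
    (h : ∀ t : ℝ, g t = 0) : g = 0 := by
  have hreal : Tendsto ((↑) : ℝ → ℂ) (𝓝[≠] 0) (𝓝[≠] 0) :=
    continuous_ofReal.continuousWithinAt.tendsto_nhdsWithin fun _ ↦ ofReal_ne_zero.mpr
  have hfreq : ∃ᶠ w in 𝓝[≠] (0 : ℂ), g w = 0 := hreal.frequently (.of_forall h)
  have hg_an : AnalyticOnNhd ℂ g Set.univ := analyticOnNhd_univ_iff_differentiable.mpr hg
  funext z
  exact hg_an.eqOn_zero_of_preconnected_of_frequently_eq_zero isPreconnected_univ
    (Set.mem_univ 0) hfreq (Set.mem_univ z)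

theorem Complex.exists_cos_eq_sin_eq {z₁ z₂ : ℂ} (hz : z₁ ^ 2 + z₂ ^ 2 = 1) :
    ∃ w, cos w = z₁ ∧ sin w = z₂ := by
  -- `z₁ + i z₂` and `z₁ - i z₂` are mutually inverse, so they are `e^{iw}` and `e^{-iw}`.
  have hmul : (z₁ + I * z₂) * (z₁ - I * z₂) = 1 := by linear_combination hz - z₂ ^ 2 * I_sq
  have hne : z₁ + I * z₂ ≠ 0 := left_ne_zero_of_mul_eq_one hmul
  refine ⟨-I * log (z₁ + I * z₂), ?_⟩
  have hexp : exp (-I * log (z₁ + I * z₂) * I) = z₁ + I * z₂ := by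
    rw [mul_comm, ← mul_assoc, mul_neg, I_mul_I, neg_neg, one_mul, exp_log hne]
  have hexp_neg : exp (-(-I * log (z₁ + I * z₂)) * I) = z₁ - I * z₂ := by
    rw [neg_mul, exp_neg, hexp, inv_eq_of_mul_eq_one_right hmul]
  rw [cos, sin, hexp, hexp_neg]
  constructor
  · ring
  · linear_combination (-z₂) * I_sq

theorem differentiable_setIntegral_exp_cos_sin {D : Set (EuclideanSpace ℝ (Fin 2))}
    (hD : Bornology.IsBounded D) (k : ℝ) :
    Differentiable ℂ fun w : ℂ ↦
      ∫ x in D, exp (I * k * (cos w * (x 0 : ℝ) + sin w * (x 1 : ℝ))) :=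
  fun w₀ ↦ (hasDerivAt_setIntegral_of_continuous hD.isCompact_closure (by fun_prop)
    (F' := fun w x ↦ exp (I * k * (cos w * (x 0 : ℝ) + sin w * (x 1 : ℝ))) *
      (I * k * (-sin w * (x 0 : ℝ) + cos w * (x 1 : ℝ))))
    (by fun_prop) (fun w x ↦ ((((hasDerivAt_cos w).mul_const _).add
      ((hasDerivAt_sin w).mul_const _)).const_mul _).cexp) w₀).differentiableAt

theorem EuclideanSpace.norm_cos_sin (t : ℝ) : ‖!₂[Real.cos t, Real.sin t]‖ = 1 := by
  simp [EuclideanSpace.norm_eq, Fin.sum_univ_two]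

theorem EuclideanSpace.inner_cos_sin (t : ℝ) (x : EuclideanSpace ℝ (Fin 2)) :
    inner ℝ !₂[Real.cos t, Real.sin t] x = Real.cos t * x 0 + Real.sin t * x 1 := by
  simp [PiLp.inner_apply, Fin.sum_univ_two, mul_comm]

theorem integral_exp_vanishes_on_complexified_sphere_general
    (D : Set (EuclideanSpace ℝ (Fin 2)))
    (hD_bdd : Bornology.IsBounded D)
    (k : ℝ)
    (h : ∀ α : EuclideanSpace ℝ (Fin 2), ‖α‖ = 1 →
      ∫ x in D, Complex.exp (Complex.I * k * ((inner ℝ α x : ℝ) : ℂ)) = 0) :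
    ∀ z₁ z₂ : ℂ, z₁ ^ 2 + z₂ ^ 2 = 1 →
      ∫ x in D, Complex.exp (Complex.I * k * (z₁ * (x 0 : ℝ) + z₂ * (x 1 : ℝ))) = 0 := by
  intro z₁ z₂ hz
  obtain ⟨w, rfl, rfl⟩ := Complex.exists_cos_eq_sin_eq hz
  refine congrFun ((differentiable_setIntegral_exp_cos_sin hD_bdd k).eq_zero_of_forall_ofReal
    fun t ↦ ?_) w
  rw [← h _ (EuclideanSpace.norm_cos_sin t)]
  simp_rw [EuclideanSpace.inner_cos_sin]
  push_cast
  rfl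

/-- Lemma 2: if `∫_D e^{ik α·x} dx = 0` for every `α` in the unit circle `S¹ ⊂ ℝ²`,
then `∫_D e^{ik (z₁x₁ + z₂x₂)} dx = 0` for every `z = (z₁, z₂) ∈ ℂ²` with
`z₁² + z₂² = 1`.  Here `D ⊂ ℝ²` is a bounded domain and `k > 0`. -/
theorem integral_exp_vanishes_on_complexified_sphere
    (D : Set (EuclideanSpace ℝ (Fin 2)))
    (hD_open : IsOpen D) (hD_conn : IsConnected D)
    (hD_bdd : Bornology.IsBounded D)
    (k : ℝ) (hk : 0 < k)
    (h : ∀ α : EuclideanSpace ℝ (Fin 2), ‖α‖ = 1 →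
      ∫ x in D, Complex.exp (Complex.I * k * ((inner ℝ α x : ℝ) : ℂ)) = 0) :
    ∀ z₁ z₂ : ℂ, z₁ ^ 2 + z₂ ^ 2 = 1 →
      ∫ x in D, Complex.exp (Complex.I * k * (z₁ * (x 0 : ℝ) + z₂ * (x 1 : ℝ))) = 0 :=
  integral_exp_vanishes_on_complexified_sphere_general D hD_bdd k h
end

section
/- Let D ⊂ ℝ² be a bounded domain that is star-shaped with respect to the origin, whose boundary S is given in polar coordinates by r = f(φ), where f is a smooth 2π-periodic function with 0 < c₁ ≤ f(φ) ≤ c₂ for constants c₁, c₂. Let k > 0. If ∫_D e^{ik α·x} dx = 0 for every α ∈ S¹, then ∫_{-π}^{π} f'(φ) f(φ) e^{ik f(φ) cos(φ − θ)} dφ = 0 for every complex number θ, where cos(φ − θ) is understood via the analytic extension of cosine to ℂ. -/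
/-! For real `θ = t` the integral is the derivative in `t` of `t ↦ ∫_D e^{ik α(t)·x} dx`, which
vanishes identically. Indeed, in polar coordinates this function is
`∫_{-π}^{π} ∫_0^{f(φ)} r e^{ikr cos(φ - t)} dr dφ`, and after the substitution `φ = ψ + t`
(allowed by periodicity) the direction `t` enters only through the upper limit `f(ψ + t)`, so
differentiating in `t` leaves just the boundary term `f'(φ) f(φ) e^{ik f(φ) cos(φ - t)}`. As a
function of `θ` the integral is entire, and it vanishes on `ℝ`, hence everywhere. -/

open MeasureTheory Real Set Filter Topology

theorem intervalIntegral.hasDerivAt_integral_of_continuous {𝕜 E : Type*} [RCLike 𝕜]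
    [NormedAddCommGroup E] [NormedSpace ℝ E] [NormedSpace 𝕜 E] {F F' : 𝕜 → ℝ → E}
    (hF : ∀ x, Continuous (F x)) (hF' : Continuous (Function.uncurry F'))
    (hderiv : ∀ x t, HasDerivAt (F · t) (F' x t) x) (a b : ℝ) (x₀ : 𝕜) :
    HasDerivAt (fun x => ∫ t in a..b, F x t) (∫ t in a..b, F' x₀ t) x₀ := by
  obtain ⟨C, hC⟩ := ((isCompact_closedBall x₀ 1).prod isCompact_uIcc).exists_bound_of_continuousOn
    hF'.continuousOn
  refine (intervalIntegral.hasDerivAt_integral_of_dominated_loc_of_deriv_le (bound := fun _ => C)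
    (Metric.ball_mem_nhds x₀ one_pos) (.of_forall fun x => (hF x).aestronglyMeasurable)
    ((hF x₀).intervalIntegrable a b) (hF'.comp (Continuous.prodMk_right x₀)).aestronglyMeasurable
    ?_ intervalIntegrable_const (.of_forall fun t _ x _ => hderiv x t)).2
  exact .of_forall fun t ht x hx =>
    hC (x, t) ⟨Metric.ball_subset_closedBall hx, uIoc_subset_uIcc ht⟩

theorem Function.Periodic.intervalIntegral_comp_add_right {E : Type*} [NormedAddCommGroup E]
    [NormedSpace ℝ E] {g : ℝ → E} {T : ℝ} (hg : Function.Periodic g T) {a b : ℝ}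
    (hab : b = a + T) (t : ℝ) :
    ∫ x in a..b, g (x + t) = ∫ x in a..b, g x := by
  subst hab
  rw [intervalIntegral.integral_comp_add_right, add_right_comm, hg.intervalIntegral_add_eq]

theorem Function.Periodic.deriv {𝕜 F : Type*} [NontriviallyNormedField 𝕜] [NormedAddCommGroup F]
    [NormedSpace 𝕜 F] {f : 𝕜 → F} {c : 𝕜} (h : Function.Periodic f c) :
    Function.Periodic (deriv f) c := fun x => by
  rw [← deriv_comp_add_const, h.funext]

theorem Differentiable.eq_zero_of_forall_ofReal_eq_zero {E : Type*} [NormedAddCommGroup E]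
    [NormedSpace ℂ E] [CompleteSpace E] {g : ℂ → E} (hg : Differentiable ℂ g)
    (h₀ : ∀ x : ℝ, g x = 0) : g = 0 := by
  have hofReal : Tendsto ((↑) : ℝ → ℂ) (𝓝[≠] 0) (𝓝[≠] 0) :=
    Complex.continuous_ofReal.continuousWithinAt.tendsto_nhdsWithin fun x hx => by
      simpa using hx
  have hanalytic : AnalyticOnNhd ℂ g univ := fun z _ => hg.analyticAt z
  funext z
  exact hanalytic.eqOn_zero_of_preconnected_of_frequently_eq_zero isPreconnected_univ
    (mem_univ 0) (hofReal.frequently (.of_forall h₀)) (mem_univ z)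

theorem integrableOn_polarCoord_target_iff {E : Type*} [NormedAddCommGroup E]
    [NormedSpace ℝ E] (g : ℝ × ℝ → E) :
    IntegrableOn (fun p => p.1 • g (polarCoord.symm p)) polarCoord.target ↔ Integrable g := by
  have hsource : IntegrableOn g polarCoord.source ↔ Integrable g :=
    ⟨fun h => integrableOn_univ.1 (h.congr_set_ae polarCoord_source_ae_eq_univ.symm),
      Integrable.integrableOn⟩
  rw [← hsource, ← polarCoord.symm_image_target_eq_source,
    integrableOn_image_iff_integrableOn_abs_det_fderiv_smul volume
      polarCoord.open_target.measurableSet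
      (fun p _ => (hasFDerivAt_polarCoord_symm p).hasFDerivWithinAt) polarCoord.symm.injOn]
  simp_rw [det_fderivPolarCoordSymm]
  exact integrableOn_congr_fun (fun p hp => by rw [abs_of_pos hp.1])
    polarCoord.open_target.measurableSet

theorem Complex.integrableOn_polarCoord_target_iff {E : Type*} [NormedAddCommGroup E]
    [NormedSpace ℝ E] (g : ℂ → E) :
    IntegrableOn (fun p => p.1 • g (Complex.polarCoord.symm p)) polarCoord.target ↔
      Integrable g := by
  rw [← (Complex.volume_preserving_equiv_real_prod.symm).integrable_comp_emb
    Complex.measurableEquivRealProd.symm.measurableEmbedding (g := g)]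
  exact _root_.integrableOn_polarCoord_target_iff (g ∘ Complex.measurableEquivRealProd.symm)

def starDomain (f : ℝ → ℝ) : Set ℂ := {z | ‖z‖ < f (Complex.arg z)}

theorem measurableSet_starDomain {f : ℝ → ℝ} (hf : Measurable f) :
    MeasurableSet (starDomain f) :=
  measurableSet_lt continuous_norm.measurable (hf.comp Complex.measurable_arg)

theorem polarCoord_symm_mem_starDomain_iff (f : ℝ → ℝ) {r φ : ℝ} (hr : 0 < r)
    (hφ : φ ∈ Ioo (-π) π) : Complex.polarCoord.symm (r, φ) ∈ starDomain f ↔ r < f φ := by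
  have harg : Complex.arg (Complex.polarCoord.symm (r, φ)) = φ := by
    simp only [Complex.polarCoord_symm_apply, Complex.ofReal_cos, Complex.ofReal_sin]
    rw [Complex.arg_real_mul _ hr, Complex.arg_cos_add_sin_mul_I ⟨hφ.1, hφ.2.le⟩]
  rw [starDomain, mem_ofPred_eq, Complex.norm_polarCoord_symm, abs_of_pos hr, harg]

theorem setIntegral_starDomain_eq_integral_polar {E : Type*} [NormedAddCommGroup E]
    [NormedSpace ℝ E] {f : ℝ → ℝ} (hf : Measurable f) (hf₀ : ∀ φ, 0 ≤ f φ) {w : ℂ → E}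
    (hw : IntegrableOn w (starDomain f)) :
    ∫ z in starDomain f, w z =
      ∫ φ in -π..π, ∫ r in 0..f φ, r • w (Complex.polarCoord.symm (r, φ)) := by
  have hD : MeasurableSet (starDomain f) := measurableSet_starDomain hf
  set F : ℝ × ℝ → E := fun p => p.1 • (starDomain f).indicator w (Complex.polarCoord.symm p)
  have hF : IntegrableOn F (Ioi 0 ×ˢ Ioo (-π) π) :=
    (Complex.integrableOn_polarCoord_target_iff _).2 ((integrable_indicator_iff hD).2 hw)
  have hF_swap : IntegrableOn (F ∘ Prod.swap) (Ioo (-π) π ×ˢ Ioi 0) := by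
    rw [IntegrableOn, Measure.volume_eq_prod, ← Measure.prod_restrict] at hF ⊢
    exact hF.swap
  have hinner : ∀ φ ∈ Ioo (-π) π,
      ∫ r in Ioi 0, F (r, φ) = ∫ r in 0..f φ, r • w (Complex.polarCoord.symm (r, φ)) := by
    intro φ hφ
    have hcut : EqOn (fun r => F (r, φ))
        ((Iio (f φ)).indicator fun r => r • w (Complex.polarCoord.symm (r, φ))) (Ioi 0) := by
      intro r hr
      have hmem := polarCoord_symm_mem_starDomain_iff f hr hφ
      simp only [F]
      by_cases hrf : r < f φ
      · rw [indicator_of_mem (show r ∈ Iio (f φ) from hrf), indicator_of_mem (hmem.2 hrf)]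
      · rw [indicator_of_notMem (show r ∉ Iio (f φ) from hrf), indicator_of_notMem (mt hmem.1 hrf),
          smul_zero]
    rw [setIntegral_congr_fun measurableSet_Ioi hcut, setIntegral_indicator measurableSet_Iio,
      Ioi_inter_Iio, intervalIntegral.integral_of_le (hf₀ φ), integral_Ioc_eq_integral_Ioo]
  calc ∫ z in starDomain f, w z = ∫ z, (starDomain f).indicator w z := (integral_indicator hD).symm
    _ = ∫ p in Ioi 0 ×ˢ Ioo (-π) π, F p := (Complex.integral_comp_polarCoord_symm _).symm
    _ = ∫ q in Ioo (-π) π ×ˢ Ioi 0, F q.swap := by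
      rw [Measure.volume_eq_prod, setIntegral_prod_swap]
    _ = ∫ φ in Ioo (-π) π, ∫ r in Ioi 0, F (r, φ) := setIntegral_prod (F ∘ Prod.swap) hF_swap
    _ = ∫ φ in -π..π, ∫ r in 0..f φ, r • w (Complex.polarCoord.symm (r, φ)) := by
      rw [setIntegral_congr_fun measurableSet_Ioo hinner, intervalIntegral.integral_of_le
        (by linarith [pi_pos]), integral_Ioc_eq_integral_Ioo]

theorem starDomain_subset_closedBall {f : ℝ → ℝ} {c : ℝ} (hfc : ∀ φ, f φ ≤ c) :
    starDomain f ⊆ Metric.closedBall 0 c := fun z hz => by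
  simpa using (lt_of_lt_of_le hz (hfc _)).le

noncomputable def radialWaveIntegral (k a ψ : ℝ) : ℂ :=
  ∫ r in (0 : ℝ)..a, (r : ℂ) * Complex.exp (Complex.I * k * ((r * cos ψ : ℝ) : ℂ))

theorem radialWaveIntegral_periodic (k a : ℝ) :
    Function.Periodic (radialWaveIntegral k a) (2 * π) := fun ψ => by
  simp only [radialWaveIntegral, cos_add_two_pi]

theorem Continuous.radialWaveIntegral (k : ℝ) {g : ℝ → ℝ} (hg : Continuous g) :
    Continuous fun ψ => radialWaveIntegral k (g ψ) ψ :=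
  intervalIntegral.continuous_parametric_intervalIntegral_of_continuous (by fun_prop) hg

theorem hasDerivAt_radialWaveIntegral (k a ψ : ℝ) :
    HasDerivAt (fun a => radialWaveIntegral k a ψ)
      (a * Complex.exp (Complex.I * k * ((a * cos ψ : ℝ) : ℂ))) a :=
  (Continuous.integral_hasStrictDerivAt (by fun_prop) 0 a).hasDerivAt

theorem setIntegral_starDomain_planeWave {f : ℝ → ℝ} (hf : Measurable f) (hf₀ : ∀ φ, 0 ≤ f φ)
    {c : ℝ} (hfc : ∀ φ, f φ ≤ c) (k t : ℝ) :
    ∫ z in starDomain f, Complex.exp (Complex.I * k * ((cos t * z.re + sin t * z.im : ℝ) : ℂ)) =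
      ∫ φ in -π..π, radialWaveIntegral k (f φ) (φ - t) := by
  have hw : IntegrableOn (fun z : ℂ =>
      Complex.exp (Complex.I * k * ((cos t * z.re + sin t * z.im : ℝ) : ℂ))) (starDomain f) :=
    ((Continuous.continuousOn (by fun_prop)).integrableOn_compact
      (isCompact_closedBall 0 c)).mono_set (starDomain_subset_closedBall hfc)
  rw [setIntegral_starDomain_eq_integral_polar hf hf₀ hw]
  refine intervalIntegral.integral_congr fun φ _ => intervalIntegral.integral_congr fun r _ => ?_
  have hcoord : cos t * (Complex.polarCoord.symm (r, φ)).re +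
      sin t * (Complex.polarCoord.symm (r, φ)).im = r * cos (φ - t) := by
    simp only [Complex.polarCoord_symm_apply, Complex.mul_re, Complex.mul_im, Complex.add_re,
      Complex.add_im, Complex.ofReal_re, Complex.ofReal_im, Complex.I_re, Complex.I_im, cos_sub]
    ring
  rw [Complex.real_smul, hcoord]

theorem setIntegral_starDomain_planeWave_eq_integral_shift {f : ℝ → ℝ} (hf : Continuous f)
    (hper : Function.Periodic f (2 * π)) (hf₀ : ∀ φ, 0 ≤ f φ) {c : ℝ} (hfc : ∀ φ, f φ ≤ c)
    (k t : ℝ) :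
    ∫ z in starDomain f, Complex.exp (Complex.I * k * ((cos t * z.re + sin t * z.im : ℝ) : ℂ)) =
      ∫ ψ in -π..π, radialWaveIntegral k (f (ψ + t)) ψ := by
  have hperiodic : Function.Periodic (fun φ => radialWaveIntegral k (f φ) (φ - t)) (2 * π) :=
    fun φ => by simp only [hper φ, add_sub_right_comm, radialWaveIntegral_periodic k _ (φ - t)]
  rw [setIntegral_starDomain_planeWave hf.measurable hf₀ hfc k t,
    ← hperiodic.intervalIntegral_comp_add_right (by ring) t]
  simp only [add_sub_cancel_right]

theorem hasDerivAt_integral_radialWaveIntegral_comp_add {f : ℝ → ℝ} (hf : ContDiff ℝ 1 f)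
    (k t : ℝ) :
    HasDerivAt (fun t => ∫ ψ in -π..π, radialWaveIntegral k (f (ψ + t)) ψ)
      (∫ ψ in -π..π, deriv f (ψ + t) •
        ((f (ψ + t) : ℂ) * Complex.exp (Complex.I * k * ((f (ψ + t) * cos ψ : ℝ) : ℂ)))) t := by
  have hf' : Continuous (deriv f) := hf.continuous_deriv le_rfl
  have hfc : Continuous f := hf.continuous
  refine intervalIntegral.hasDerivAt_integral_of_continuous
    (F' := fun t ψ => deriv f (ψ + t) •
      ((f (ψ + t) : ℂ) * Complex.exp (Complex.I * k * ((f (ψ + t) * cos ψ : ℝ) : ℂ))))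
    (fun t => (hfc.comp (continuous_add_const t)).radialWaveIntegral k) (by fun_prop)
    (fun t ψ => ?_) _ _ t
  exact (hasDerivAt_radialWaveIntegral k _ ψ).scomp t
    (((hf.differentiable one_ne_zero) _).hasDerivAt.comp_const_add ψ t)

theorem hasDerivAt_setIntegral_starDomain_planeWave {f : ℝ → ℝ} (hf : ContDiff ℝ 1 f)
    (hper : Function.Periodic f (2 * π)) (hf₀ : ∀ φ, 0 ≤ f φ) {c : ℝ} (hfc : ∀ φ, f φ ≤ c)
    (k t : ℝ) :
    HasDerivAt (fun t => ∫ z in starDomain f,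
        Complex.exp (Complex.I * k * ((cos t * z.re + sin t * z.im : ℝ) : ℂ)))
      (∫ φ in -π..π, deriv f φ •
        ((f φ : ℂ) * Complex.exp (Complex.I * k * ((f φ * cos (φ - t) : ℝ) : ℂ)))) t := by
  have hperiodic : Function.Periodic (fun φ => deriv f φ •
      ((f φ : ℂ) * Complex.exp (Complex.I * k * ((f φ * cos (φ - t) : ℝ) : ℂ)))) (2 * π) :=
    fun φ => by simp only [hper φ, hper.deriv φ, add_sub_right_comm, cos_add_two_pi]
  rw [funext (setIntegral_starDomain_planeWave_eq_integral_shift hf.continuous hper hf₀ hfc k),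
    ← hperiodic.intervalIntegral_comp_add_right (by ring) t]
  simpa only [add_sub_cancel_right] using hasDerivAt_integral_radialWaveIntegral_comp_add hf k t

noncomputable def boundaryIntegral (f : ℝ → ℝ) (k : ℝ) (θ : ℂ) : ℂ :=
  ∫ φ in (-π)..π, ((deriv f φ * f φ : ℝ) : ℂ) *
    Complex.exp (Complex.I * k * (f φ : ℝ) *
      ((Real.cos φ : ℂ) * Complex.cos θ + (Real.sin φ : ℂ) * Complex.sin θ))

theorem boundaryIntegral_ofReal (f : ℝ → ℝ) (k t : ℝ) :
    boundaryIntegral f k t = ∫ φ in -π..π, deriv f φ •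
      ((f φ : ℂ) * Complex.exp (Complex.I * k * ((f φ * cos (φ - t) : ℝ) : ℂ))) := by
  refine intervalIntegral.integral_congr fun φ _ => ?_
  simp only [Complex.real_smul, ← Complex.ofReal_cos, ← Complex.ofReal_sin, cos_sub]
  push_cast
  simp only [mul_assoc]

theorem differentiable_boundaryIntegral {f : ℝ → ℝ} (hf : ContDiff ℝ 1 f) (k : ℝ) :
    Differentiable ℂ (boundaryIntegral f k) := by
  have hf' : Continuous (deriv f) := hf.continuous_deriv le_rfl
  have hfc : Continuous f := hf.continuous
  intro θ
  refine (intervalIntegral.hasDerivAt_integral_of_continuous (fun θ => by fun_prop)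
    (F' := fun θ φ => ((deriv f φ * f φ : ℝ) : ℂ) *
      (Complex.exp (Complex.I * k * (f φ : ℝ) *
        ((Real.cos φ : ℂ) * Complex.cos θ + (Real.sin φ : ℂ) * Complex.sin θ)) *
      (Complex.I * k * (f φ : ℝ) *
        ((Real.cos φ : ℂ) * -Complex.sin θ + (Real.sin φ : ℂ) * Complex.cos θ))))
    (by fun_prop) (fun θ φ => ?_) _ _ θ).differentiableAt
  exact (((((Complex.hasDerivAt_cos θ).const_mul _).add
    ((Complex.hasDerivAt_sin θ).const_mul _)).const_mul _).cexp).const_mul _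

theorem integral_over_boundary_parametrization_vanishes_general
    (f : ℝ → ℝ) (hf : ContDiff ℝ (⊤ : ℕ∞) f)
    (hper : Function.Periodic f (2 * π))
    (c₁ c₂ : ℝ) (hc₁ : 0 < c₁) (hfc : ∀ φ, c₁ ≤ f φ ∧ f φ ≤ c₂)
    (k : ℝ)
    (D : Set ℂ)
    -- `D` is the star-shaped domain with boundary `r = f(φ)` in polar coordinates
    (hD : D = {z : ℂ | ‖z‖ < f (Complex.arg z)})
    (h : ∀ t : ℝ, ∫ z in D,
      Complex.exp (Complex.I * k * ((Real.cos t * z.re + Real.sin t * z.im : ℝ) : ℂ)) = 0) :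
    ∀ θ : ℂ, ∫ φ in (-π)..π, ((deriv f φ * f φ : ℝ) : ℂ) *
      Complex.exp (Complex.I * k * (f φ : ℝ) *
        ((Real.cos φ : ℂ) * Complex.cos θ + (Real.sin φ : ℂ) * Complex.sin θ)) = 0 := by
  subst hD
  have hf₁ : ContDiff ℝ 1 f := hf.of_le (by exact_mod_cast le_top)
  have hf₀ : ∀ φ, 0 ≤ f φ := fun φ => hc₁.le.trans (hfc φ).1
  have hvanish : (fun t : ℝ => ∫ z in starDomain f,
      Complex.exp (Complex.I * k * ((cos t * z.re + sin t * z.im : ℝ) : ℂ))) = fun _ => 0 :=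
    funext h
  have hreal (t : ℝ) : boundaryIntegral f k t = 0 := by
    have hderiv := hasDerivAt_setIntegral_starDomain_planeWave hf₁ hper hf₀ (fun φ => (hfc φ).2) k t
    rw [hvanish] at hderiv
    rw [boundaryIntegral_ofReal, hderiv.unique (hasDerivAt_const t 0)]
  exact congrFun ((differentiable_boundaryIntegral hf₁ k).eq_zero_of_forall_ofReal_eq_zero hreal)

/-- Lemma 3: let `D ⊂ ℝ² ≅ ℂ` be the bounded star-shaped (with respect to the origin)
domain whose boundary is given in polar coordinates by `r = f(φ)`, where `f` is a smooth
`2π`-periodic function with `0 < c₁ ≤ f ≤ c₂`, and let `k > 0`.  If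
`∫_D e^{ik α·x} dx = 0` for every `α = (cos t, sin t) ∈ S¹`, then
`∫_{-π}^{π} f'(φ) f(φ) e^{ik f(φ) cos(φ - θ)} dφ = 0` for every `θ ∈ ℂ`, where
`cos(φ - θ) = cos φ cos θ + sin φ sin θ` is the analytic extension of the cosine. -/
theorem integral_over_boundary_parametrization_vanishes
    (f : ℝ → ℝ) (hf : ContDiff ℝ (⊤ : ℕ∞) f)
    (hper : Function.Periodic f (2 * π))
    (c₁ c₂ : ℝ) (hc₁ : 0 < c₁) (hfc : ∀ φ, c₁ ≤ f φ ∧ f φ ≤ c₂)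
    (k : ℝ) (hk : 0 < k)
    (D : Set ℂ)
    -- `D` is the star-shaped domain with boundary `r = f(φ)` in polar coordinates
    (hD : D = {z : ℂ | ‖z‖ < f (Complex.arg z)})
    (h : ∀ t : ℝ, ∫ z in D,
      Complex.exp (Complex.I * k * ((Real.cos t * z.re + Real.sin t * z.im : ℝ) : ℂ)) = 0) :
    ∀ θ : ℂ, ∫ φ in (-π)..π, ((deriv f φ * f φ : ℝ) : ℂ) *
      Complex.exp (Complex.I * k * (f φ : ℝ) *
        ((Real.cos φ : ℂ) * Complex.cos θ + (Real.sin φ : ℂ) * Complex.sin θ)) = 0 :=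
  integral_over_boundary_parametrization_vanishes_general f hf hper c₁ c₂ hc₁ hfc k D hD h
end

section
/- Fix real numbers a and b. Then, as A → ∞ (with A > |a|), ∫_0^∞ e^{−s(a+A)} e^{i(s²+1)^{1/2} b} ds = (a + A)^{−1} e^{ib} (1 + O(A^{−1})); that is, (a+A) e^{−ib} ∫_0^∞ e^{−s(a+A)+i(s²+1)^{1/2} b} ds − 1 = O(A^{−1}) as A → ∞. -/
/-!
Multiplying by `e^{ib}`, the claim says that the Laplace transform at `M = a + A` of
`f(s) = e^{i √(s²+1) b}` satisfies `M ∫₀^∞ e^{-Ms} f(s) ds = f(0) + O(1/M)`. This holds for every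
`f` with `‖f s - f 0‖ ≤ L s`: since `M ∫₀^∞ e^{-Ms} ds = 1`, the error is
`M ∫₀^∞ e^{-Ms} (f s - f 0) ds`, of norm at most `M L ∫₀^∞ s e^{-Ms} ds = L / M`. Here `L = |b|`,
because `t ↦ e^{it}` is `1`-Lipschitz and `|√(s²+1) - 1| ≤ |s|`.
-/

open MeasureTheory Real Filter Asymptotics Set

lemma integral_exp_neg_mul_Ioi {M : ℝ} (hM : 0 < M) :
    ∫ s in Ioi (0 : ℝ), exp (-(M * s)) = M⁻¹ := by
  simpa using integral_rpow_mul_exp_neg_mul_Ioi one_pos hM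

lemma integral_mul_exp_neg_mul_Ioi {M : ℝ} (hM : 0 < M) :
    ∫ s in Ioi (0 : ℝ), s * exp (-(M * s)) = (M ^ 2)⁻¹ := by
  simpa [show (2 : ℝ) - 1 = 1 by norm_num] using integral_rpow_mul_exp_neg_mul_Ioi two_pos hM

lemma integrableOn_mul_exp_neg_mul_Ioi {M : ℝ} (hM : 0 < M) :
    IntegrableOn (fun s : ℝ => s * exp (-(M * s))) (Ioi 0) := by
  simpa using integrableOn_rpow_mul_exp_neg_mul_rpow (s := 1) (p := 1) (by norm_num) one_pos hM

lemma abs_sqrt_sq_add_one_sub_one_le (s : ℝ) : |√(s ^ 2 + 1) - 1| ≤ |s| := by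
  have h1 : 1 ≤ √(s ^ 2 + 1) := Real.one_le_sqrt.mpr (le_add_of_nonneg_left (sq_nonneg s))
  have h2 : √(s ^ 2 + 1) ≤ |s| + 1 :=
    Real.sqrt_le_iff.mpr ⟨by positivity, by nlinarith [sq_abs s, abs_nonneg s]⟩
  rw [abs_of_nonneg (by linarith)]
  linarith

lemma norm_exp_I_mul_sub_exp_I_mul_le (x y : ℝ) :
    ‖Complex.exp (Complex.I * x) - Complex.exp (Complex.I * y)‖ ≤ |x - y| := by
  have : Complex.exp (Complex.I * x) - Complex.exp (Complex.I * y)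
      = Complex.exp (Complex.I * y) * (Complex.exp (Complex.I * ↑(x - y)) - 1) := by
    rw [mul_sub, ← Complex.exp_add]; push_cast; ring_nf
  rw [this, norm_mul, Complex.norm_exp_I_mul_ofReal, one_mul]
  exact Real.norm_exp_I_mul_ofReal_sub_one_le

section Laplace

variable {E : Type*} [NormedAddCommGroup E] [NormedSpace ℝ E] [CompleteSpace E]

lemma norm_smul_integral_exp_neg_mul_smul_sub_le {f : ℝ → E} {L M : ℝ} (hM : 0 < M)
    (hf : AEStronglyMeasurable f (volume.restrict (Ioi 0)))
    (hL : ∀ s > 0, ‖f s - f 0‖ ≤ L * s) :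
    ‖M • (∫ s in Ioi (0 : ℝ), exp (-(M * s)) • f s) - f 0‖ ≤ L / M := by
  have hexp : IntegrableOn (fun s : ℝ => exp (-(M * s))) (Ioi 0) := by
    simpa using exp_neg_integrableOn_Ioi 0 hM
  have hpt : ∀ᵐ s ∂volume.restrict (Ioi 0),
      ‖exp (-(M * s)) • (f s - f 0)‖ ≤ L * (s * exp (-(M * s))) := by
    filter_upwards [ae_restrict_mem measurableSet_Ioi] with s hs
    rw [norm_smul, Real.norm_of_nonneg (exp_pos _).le]
    nlinarith [hL s hs, exp_pos (-(M * s))]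
  have hdiff : IntegrableOn (fun s => exp (-(M * s)) • (f s - f 0)) (Ioi 0) :=
    ((integrableOn_mul_exp_neg_mul_Ioi hM).const_mul L).mono'
      ((by fun_prop : Continuous fun s : ℝ => exp (-(M * s))).aestronglyMeasurable.smul
        (hf.sub aestronglyMeasurable_const)) hpt
  have hsplit : ∫ s in Ioi (0 : ℝ), exp (-(M * s)) • f s
      = (∫ s in Ioi (0 : ℝ), exp (-(M * s)) • (f s - f 0)) + M⁻¹ • f 0 := by
    rw [← integral_exp_neg_mul_Ioi hM, ← integral_smul_const,
      ← integral_add hdiff (hexp.smul_const _)]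
    simp_rw [← smul_add, sub_add_cancel]
  have hcentre : M • (∫ s in Ioi (0 : ℝ), exp (-(M * s)) • f s) - f 0
      = M • ∫ s in Ioi (0 : ℝ), exp (-(M * s)) • (f s - f 0) := by
    rw [hsplit, smul_add, smul_smul, mul_inv_cancel₀ hM.ne', one_smul, add_sub_cancel_right]
  have hbound : ‖∫ s in Ioi (0 : ℝ), exp (-(M * s)) • (f s - f 0)‖ ≤ L / M ^ 2 := by
    refine (norm_integral_le_of_norm_le ((integrableOn_mul_exp_neg_mul_Ioi hM).const_mul L)
      hpt).trans_eq ?_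
    rw [integral_const_mul, integral_mul_exp_neg_mul_Ioi hM, div_eq_mul_inv]
  calc ‖M • (∫ s in Ioi (0 : ℝ), exp (-(M * s)) • f s) - f 0‖
      ≤ M * (L / M ^ 2) := by
        rw [hcentre, norm_smul, Real.norm_of_nonneg hM.le]
        exact mul_le_mul_of_nonneg_left hbound hM.le
    _ = L / M := by field_simp

end Laplace

lemma norm_mul_exp_neg_I_mul_integral_sub_one_le (b : ℝ) {M : ℝ} (hM : 0 < M) :
    ‖(M : ℂ) * Complex.exp (-(Complex.I * b)) *
        (∫ s in Ioi (0 : ℝ),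
          Complex.exp (((-(s * M)) : ℝ) + Complex.I * ((√(s ^ 2 + 1) * b : ℝ) : ℂ))) - 1‖
      ≤ |b| / M := by
  set f : ℝ → ℂ := fun s => Complex.exp (Complex.I * ((√(s ^ 2 + 1) * b : ℝ) : ℂ))
  have hf0 : f 0 = Complex.exp (Complex.I * b) := by simp [f]
  have hL : ∀ s > 0, ‖f s - f 0‖ ≤ |b| * s := fun s hs => by
    calc ‖f s - f 0‖ ≤ |√(s ^ 2 + 1) * b - √(0 ^ 2 + 1) * b| :=
          norm_exp_I_mul_sub_exp_I_mul_le _ _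
      _ = |√(s ^ 2 + 1) - 1| * |b| := by rw [← sub_mul, abs_mul]; norm_num
      _ ≤ |s| * |b| :=
          mul_le_mul_of_nonneg_right (abs_sqrt_sq_add_one_sub_one_le s) (abs_nonneg b)
      _ = |b| * s := by rw [abs_of_pos hs, mul_comm]
  have hf : Continuous f := by fun_prop
  have hintegrand : ∀ s : ℝ,
      Complex.exp (((-(s * M)) : ℝ) + Complex.I * ((√(s ^ 2 + 1) * b : ℝ) : ℂ))
        = exp (-(M * s)) • f s := fun s => by
    rw [Complex.real_smul, Complex.ofReal_exp, ← Complex.exp_add, mul_comm M]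
  have hunit : Complex.exp (-(Complex.I * b)) * f 0 = 1 := by
    rw [hf0, ← Complex.exp_add, neg_add_cancel, Complex.exp_zero]
  have hlaplace := norm_smul_integral_exp_neg_mul_smul_sub_le hM hf.aestronglyMeasurable hL
  simp_rw [hintegrand]
  calc _ = ‖Complex.exp (-(Complex.I * b)) *
        (M • (∫ s in Ioi (0 : ℝ), exp (-(M * s)) • f s) - f 0)‖ := by
        rw [mul_sub, hunit, Complex.real_smul, mul_left_comm, mul_assoc]
    _ ≤ |b| / M := by
        rwa [norm_mul, ← mul_neg, ← Complex.ofReal_neg, Complex.norm_exp_I_mul_ofReal, one_mul]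

/-- Formula (7): for fixed real `a` and `b`, as `A → ∞`,
`∫_0^∞ e^{-s(a+A)} e^{i(s²+1)^{1/2} b} ds = (a+A)⁻¹ e^{ib} (1 + O(A⁻¹))`, i.e.
`(a+A) e^{-ib} ∫_0^∞ e^{-s(a+A) + i(s²+1)^{1/2} b} ds - 1 = O(A⁻¹)` as `A → ∞`. -/
theorem laplace_integral_asymptotics (a b : ℝ) :
    (fun A : ℝ =>
        ((a + A : ℝ) : ℂ) * Complex.exp (-(Complex.I * (b : ℂ))) *
          (∫ s in Set.Ioi (0 : ℝ), Complex.exp (((-(s * (a + A)) : ℝ) : ℂ) +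
            Complex.I * ((Real.sqrt (s ^ 2 + 1) * b : ℝ) : ℂ))) - 1)
      =O[atTop] (fun A : ℝ => A⁻¹) := by
  have hinv : (fun A : ℝ => (a + A)⁻¹) =O[atTop] fun A => A⁻¹ :=
    (IsEquivalent.inv ((isLittleO_const_id_atTop a).congr_left fun A =>
      (add_sub_cancel_right a A).symm)).isBigO
  refine (IsBigO.of_bound |b| ?_).trans hinv
  filter_upwards [eventually_gt_atTop (-a)] with A hA
  have hM : 0 < a + A := by linarith
  rw [Real.norm_of_nonneg (inv_nonneg.mpr hM.le), ← div_eq_mul_inv]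
  exact norm_mul_exp_neg_I_mul_integral_sub_one_le b hM
end
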